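/- Let F = (F_1, …, F_n) be a polynomial vector field on ℝⁿ, let V, B ∈ ℝ[x_1, …, x_n], let α > 0, and suppose there exist SOS polynomials s_1, s_2 ∈ ℝ[x_1, …, x_n] such that both −⟨∇V, F⟩ − s_1·B and ⟨∇B, F⟩ + (α − s_2)·B are sums of squares. Then for every solution x : ℝ → ℝⁿ of ẋ = F(x) with B(x(0)) ≥ 0: (i) B(x(t)) ≥ 0 for all t ≥ 0, and (ii) the function t ↦ V(x(t)) is nonincreasing on [0, ∞); i.e., the region {y : B(y) ≥ 0} is forward invariant and the Lyapunov function V is nonincreasing along all trajectories starting in it. -/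
import Mathlib

open MvPolynomial Set

/-- A real multivariate polynomial is a sum of squares. -/
def IsSOS {N : ℕ} (p : MvPolynomial (Fin N) ℝ) : Prop :=
  ∃ (k : ℕ) (f : Fin k → MvPolynomial (Fin N) ℝ), p = ∑ i, (f i) ^ 2

/-- The Lie derivative ⟨∇W, F⟩ = Σᵢ (∂W/∂xᵢ)·Fᵢ of a polynomial `W` along a
polynomial vector field `F`. -/
noncomputable def lieDeriv {N : ℕ} (W : MvPolynomial (Fin N) ℝ)
    (F : Fin N → MvPolynomial (Fin N) ℝ) : MvPolynomial (Fin N) ℝ :=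
  ∑ i, (pderiv i W) * F i

private lemma isSOS_nonneg {N : ℕ} {p : MvPolynomial (Fin N) ℝ} (hp : IsSOS p)
    (y : Fin N → ℝ) : 0 ≤ eval y p := by
  obtain ⟨k, f, rfl⟩ := hp
  simp only [map_sum, map_pow]
  exact Finset.sum_nonneg fun i _ => sq_nonneg _

private lemma lieDeriv_add {N : ℕ} (p q : MvPolynomial (Fin N) ℝ)
    (F : Fin N → MvPolynomial (Fin N) ℝ) :
    lieDeriv (p + q) F = lieDeriv p F + lieDeriv q F := by
  simp [lieDeriv, add_mul, Finset.sum_add_distrib]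

private lemma lieDeriv_mul_X {N : ℕ} (p : MvPolynomial (Fin N) ℝ) (n : Fin N)
    (F : Fin N → MvPolynomial (Fin N) ℝ) :
    lieDeriv (p * X n) F = lieDeriv p F * X n + p * F n := by
  simp only [lieDeriv, pderiv_mul, add_mul, Finset.sum_add_distrib, Finset.sum_mul]
  congr 1
  · exact Finset.sum_congr rfl fun i _ => by ring
  · rw [Finset.sum_eq_single n]
    · simp
    · intro i _ hin
      simp [pderiv_X_of_ne (Ne.symm hin)]
    · simp

private lemma chain_rule {N : ℕ} (F : Fin N → MvPolynomial (Fin N) ℝ)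
    (x : ℝ → Fin N → ℝ)
    (hx : ∀ i, ∀ t : ℝ, 0 ≤ t → HasDerivAt (fun τ => x τ i) (eval (x t) (F i)) t)
    (W : MvPolynomial (Fin N) ℝ) (t : ℝ) (ht : 0 ≤ t) :
    HasDerivAt (fun τ => eval (x τ) W) (eval (x t) (lieDeriv W F)) t := by
  induction W using MvPolynomial.induction_on with
  | C a =>
      have : eval (x t) (lieDeriv (C a : MvPolynomial (Fin N) ℝ) F) = 0 := by
        simp [lieDeriv, pderiv_C]
      rw [this]
      simpa using (hasDerivAt_const t (a : ℝ))
  | add p q hp hq =>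
      have := hp.add hq
      simp only [map_add, lieDeriv_add] at this ⊢
      exact this
  | mul_X p n hp =>
      have := hp.mul (hx n t ht)
      simp only [map_add, map_mul, lieDeriv_mul_X, eval_X] at this ⊢
      exact this

/-- Theorem 2 (forward invariance and stability): if `-⟨∇V,F⟩ - s₁ B` and
`⟨∇B,F⟩ + (α - s₂) B` are SOS with `s₁, s₂` SOS and `α > 0`, then the region
`{y | B(y) ≥ 0}` is forward invariant for `ẋ = F(x)` and `V` is nonincreasing
along every trajectory starting in it. -/
theorem sos_forward_invariance_and_stability {N : ℕ}
    (F : Fin N → MvPolynomial (Fin N) ℝ)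
    (V B : MvPolynomial (Fin N) ℝ) (α : ℝ) (hα : 0 < α)
    (s₁ s₂ : MvPolynomial (Fin N) ℝ) (hs₁ : IsSOS s₁) (hs₂ : IsSOS s₂)
    (h1 : IsSOS (-(lieDeriv V F) - s₁ * B))
    (h2 : IsSOS (lieDeriv B F + (C α - s₂) * B))
    (x : ℝ → Fin N → ℝ)
    (hx : ∀ i, ∀ t : ℝ, 0 ≤ t → HasDerivAt (fun τ => x τ i) (eval (x t) (F i)) t)
    (h0 : 0 ≤ eval (x 0) B) :
    (∀ t : ℝ, 0 ≤ t → 0 ≤ eval (x t) B) ∧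
      AntitoneOn (fun t => eval (x t) V) (Ici 0) := by
  set b : ℝ → ℝ := fun τ => eval (x τ) B with hb
  set c : ℝ → ℝ := fun τ => eval (x τ) s₂ with hc
  have hbd : ∀ t : ℝ, 0 ≤ t →
      HasDerivAt b (eval (x t) (lieDeriv B F)) t := fun t ht =>
    chain_rule F x hx B t ht
  -- the key differential inequality
  have hineq : ∀ t : ℝ, 0 ≤ t → (c t - α) * b t ≤ eval (x t) (lieDeriv B F) := by
    intro t ht
    have := isSOS_nonneg h2 (x t)
    simp only [map_add, map_mul, map_sub, eval_C] at this
    nlinarith [this]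
  -- Part 1: forward invariance
  have part1 : ∀ t : ℝ, 0 ≤ t → 0 ≤ b t := by
    intro T hT
    by_contra hneg
    push_neg at hneg
    -- T > 0
    have hT0 : 0 < T := by
      rcases lt_or_eq_of_le hT with h | h
      · exact h
      · exact absurd h0 (by rw [← h] at hneg; simpa using not_le.2 hneg)
    set S : Set ℝ := {t ∈ Icc 0 T | 0 ≤ b t} with hS
    have hS0 : (0 : ℝ) ∈ S := ⟨⟨le_refl 0, hT⟩, h0⟩
    have hSne : S.Nonempty := ⟨0, hS0⟩
    have hSbdd : BddAbove S := ⟨T, fun t ht => ht.1.2⟩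
    set s := sSup S with hs
    have hsmem : s ∈ Icc 0 T :=
      ⟨le_csSup hSbdd hS0, csSup_le hSne fun t ht => ht.1.2⟩
    have hbs_cont : ContinuousAt b s := (hbd s hsmem.1).continuousAt
    -- 0 ≤ b s
    have hbs_nonneg : 0 ≤ b s := by
      have hcl : s ∈ closure S := csSup_mem_closure hSne hSbdd
      haveI hne : (nhdsWithin s S).NeBot := mem_closure_iff_nhdsWithin_neBot.1 hcl
      refine ge_of_tendsto ((hbs_cont.continuousWithinAt : ContinuousWithinAt b S s).tendsto) ?_
      exact Filter.eventually_of_mem self_mem_nhdsWithin fun t ht => ht.2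
    have hsT : s < T := by
      rcases lt_or_eq_of_le hsmem.2 with h | h
      · exact h
      · exfalso; rw [h] at hbs_nonneg; exact absurd hbs_nonneg (not_le.2 hneg)
    -- b is negative on (s, T]
    have hbneg : ∀ t, s < t → t ≤ T → b t < 0 := by
      intro t hst htT
      by_contra hbt
      push_neg at hbt
      have : t ∈ S := ⟨⟨le_trans hsmem.1 (le_of_lt hst), htT⟩, hbt⟩
      exact absurd (le_csSup hSbdd this) (not_le.2 hst)
    -- b s ≤ 0, hence b s = 0
    have hbs_zero : b s = 0 := by
      refine le_antisymm ?_ hbs_nonneg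
      have hne : (nhdsWithin s (Ioi s)).NeBot := nhdsGT_neBot s
      refine le_of_tendsto ((hbs_cont.continuousWithinAt : ContinuousWithinAt b (Ioi s) s).tendsto) ?_
      have hmem : Ioo s T ∈ nhdsWithin s (Ioi s) := Ioo_mem_nhdsGT_of_mem ⟨le_refl s, hsT⟩
      exact Filter.eventually_of_mem hmem fun t ht =>
        le_of_lt (hbneg t ht.1 (le_of_lt ht.2))
    -- f := -b on [s, T]
    set f : ℝ → ℝ := fun τ => -b τ with hf
    have hf_nonneg : ∀ t ∈ Icc s T, 0 ≤ f t := by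
      intro t ht
      rcases eq_or_lt_of_le ht.1 with h | h
      · simp [hf, ← h, hbs_zero]
      · exact le_of_lt (by simpa [hf] using neg_pos.2 (hbneg t h ht.2))
    -- bound on s₂ along the trajectory on [s, T]
    have hc_cont : ContinuousOn c (Icc s T) := fun t ht =>
      ((chain_rule F x hx s₂ t (le_trans hsmem.1 ht.1)).continuousAt).continuousWithinAt
    obtain ⟨t₀, ht₀, hmax⟩ := isCompact_Icc.exists_isMaxOn
      (nonempty_Icc.2 (le_of_lt hsT)) hc_cont
    set K := c t₀ with hK
    -- Grönwall setup
    have hf_cont : ContinuousOn f (Icc s T) := fun t ht =>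
      ((hbd t (le_trans hsmem.1 ht.1)).neg.continuousAt).continuousWithinAt
    set f' : ℝ → ℝ := fun τ => -(eval (x τ) (lieDeriv B F)) with hf'
    have hf'_deriv : ∀ t ∈ Ico s T, HasDerivAt f (f' t) t := fun t ht =>
      (hbd t (le_trans hsmem.1 ht.1)).neg
    have hliminf : ∀ t ∈ Ico s T, ∀ r, f' t < r →
        ∃ᶠ z in nhdsWithin t (Set.Ioi t), (z - t)⁻¹ * (f z - f t) < r := by
      intro t ht r hr
      have hd : HasDerivWithinAt f (f' t) (Set.Ioi t) t :=
        (hf'_deriv t ht).hasDerivWithinAt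
      have := hasDerivWithinAt_iff_tendsto_slope.1 hd
      have hIoi : Set.Ioi t \ {t} = Set.Ioi t :=
        Set.diff_singleton_eq_self (by simp)
      rw [hIoi] at this
      have hev : ∀ᶠ z in nhdsWithin t (Set.Ioi t), slope f t z < r :=
        this (Iio_mem_nhds hr)
      have hne : (nhdsWithin t (Set.Ioi t)).NeBot := nhdsGT_neBot t
      refine (hev.mono fun z hz => ?_).frequently
      rwa [slope_def_field, div_eq_inv_mul] at hz
    have hbound : ∀ t ∈ Ico s T, f' t ≤ K * f t + 0 := by
      intro t ht
      have ht0 : 0 ≤ t := le_trans hsmem.1 ht.1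
      have h := hineq t ht0
      have hft : 0 ≤ f t := hf_nonneg t ⟨ht.1, le_of_lt ht.2⟩
      have hcK : c t ≤ K := hmax ⟨ht.1, le_of_lt ht.2⟩
      have : f' t ≤ (c t - α) * f t := by
        simp only [hf', hf]
        nlinarith [h]
      calc f' t ≤ (c t - α) * f t := this
        _ ≤ K * f t := by nlinarith
        _ = K * f t + 0 := by ring
    have hgron := le_gronwallBound_of_liminf_deriv_right_le hf_cont hliminf
      (by simp [hf, hbs_zero] : f s ≤ 0) hbound T ⟨le_of_lt hsT, le_refl T⟩
    rw [gronwallBound_ε0_δ0] at hgron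
    have : 0 < f T := by simpa [hf] using hneg
    linarith
  refine ⟨part1, ?_⟩
  -- Part 2: V nonincreasing
  refine antitoneOn_of_deriv_nonpos (convex_Ici 0) ?_ ?_ ?_
  · exact fun t ht => ((chain_rule F x hx V t ht).continuousAt).continuousWithinAt
  · intro t ht
    rw [interior_Ici] at ht
    exact ((chain_rule F x hx V t (le_of_lt ht)).differentiableAt).differentiableWithinAt
  · intro t ht
    rw [interior_Ici] at ht
    have ht0 : (0 : ℝ) ≤ t := le_of_lt ht
    rw [(chain_rule F x hx V t ht0).deriv]
    have h := isSOS_nonneg h1 (x t)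
    simp only [map_sub, map_neg, map_mul] at h
    have hs1 := isSOS_nonneg hs₁ (x t)
    have hbt := part1 t ht0
    nlinarith
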